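/- Let Ω ⊂ ℝⁿ be the image of the canonical simplex Δ under the affine map x = A⁻¹y + a with A a nonsingular n×n real matrix and a ∈ ℝⁿ. Let f be a polynomial of degree t and set g(y) := f(A⁻¹y + a), written g = Σ_{j=0}^t g_j with g_j homogeneous of degree j. Then ∫_Ω f(x) dx = (1/|det A|) · (1/n!) · (ĝ₀ + Σ_{j=1}^t ĝ_j(ξ_j)), where ξ_j = e/((n+1)⋯(n+j))^{1/j} and ĝ_j is the Bombieri polynomial of g_j. -/

import Mathlib

/-!
Substituting `x = A⁻¹ y + a` turns the integral over `Ω` into `|det A|⁻¹` times the integral of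
`g = ∑ g_j` over the corner simplex `Δ`. Fubini in the first coordinate and the Beta integral
give, by induction on `n`, Dirichlet's formula `∫_Δ y^α dy = α! / (n + |α|)!`, so a form `g_j`
of degree `j` integrates to `ĝ_j(1, …, 1) / (n + j)!`. Since `ĝ_j` is homogeneous of degree `j`
and `ξ_j ^ j = n! / (n + j)!`, this equals `ĝ_j(ξ_j) / n!`; for `j = 0` it is `g_0 / n!`.
-/

open MeasureTheory Finset

/-- The Bombieri polynomial of `p`, evaluated at `x`. -/
noncomputable def bombieriEval {n : ℕ} (p : MvPolynomial (Fin n) ℝ) (x : Fin n → ℝ) : ℝ :=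
  ∑ α ∈ p.support, (∏ i, (Nat.factorial (α i) : ℝ)) * p.coeff α * ∏ i, x i ^ α i

open Matrix Nat

/-- The dilate `r • Δ`; the simplex `Δ` of the statement is `cornerSimplex n 1`. -/
def cornerSimplex (n : ℕ) (r : ℝ) : Set (Fin n → ℝ) := {y | (∀ i, 0 ≤ y i) ∧ ∑ i, y i ≤ r}

namespace cornerSimplex

theorem isClosed (n : ℕ) (r : ℝ) : IsClosed (cornerSimplex n r) := by
  simp only [cornerSimplex, Set.ofPred_and, Set.ofPred_forall]
  exact (isClosed_iInter fun i => isClosed_le continuous_const (continuous_apply i)).inter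
    (isClosed_le (by fun_prop) continuous_const)

theorem measurableSet (n : ℕ) (r : ℝ) : MeasurableSet (cornerSimplex n r) :=
  (isClosed n r).measurableSet

theorem subset_Icc (n : ℕ) (r : ℝ) : cornerSimplex n r ⊆ Set.Icc 0 (fun _ => r) :=
  fun _ ⟨hy, hsum⟩ => ⟨hy, fun i => (single_le_sum (fun j _ => hy j) (mem_univ i)).trans hsum⟩

theorem isCompact (n : ℕ) (r : ℝ) : IsCompact (cornerSimplex n r) :=
  isCompact_Icc.of_isClosed_subset (isClosed n r) (subset_Icc n r)

theorem integrableOn {E : Type*} [NormedAddCommGroup E] {n : ℕ} {f : (Fin n → ℝ) → E}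
    (hf : Continuous f) (r : ℝ) :
    IntegrableOn f (cornerSimplex n r) :=
  hf.continuousOn.integrableOn_compact (isCompact n r)

theorem eq_empty {n : ℕ} {r : ℝ} (hr : r < 0) : cornerSimplex n r = ∅ :=
  Set.eq_empty_of_forall_notMem fun _ ⟨hy, hsum⟩ =>
    (hsum.trans_lt hr).not_ge (sum_nonneg fun i _ => hy i)

theorem cons_mem_iff {n : ℕ} {r x : ℝ} {z : Fin n → ℝ} :
    (Fin.cons x z : Fin (n + 1) → ℝ) ∈ cornerSimplex (n + 1) r ↔
      0 ≤ x ∧ z ∈ cornerSimplex n (r - x) := by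
  simp only [cornerSimplex, Set.mem_ofPred_eq, Fin.forall_fin_succ, Fin.sum_univ_succ,
    Fin.cons_zero, Fin.cons_succ, le_sub_iff_add_le', and_assoc]

end cornerSimplex

theorem integral_eq_integral_integral_cons {E : Type*} [NormedAddCommGroup E] [NormedSpace ℝ E]
    {n : ℕ} {F : (Fin (n + 1) → ℝ) → E} (hF : Integrable F) :
    ∫ y, F y = ∫ x : ℝ, ∫ z : Fin n → ℝ, F (Fin.cons x z) := by
  have h := (volume_preserving_piFinSuccAbove (fun _ : Fin (n + 1) => ℝ) 0).symm
  rw [← h.integral_comp', Measure.volume_eq_prod, integral_prod]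
  · simp only [MeasurableEquiv.piFinSuccAbove_symm_apply, Fin.insertNthEquiv_zero]
    rfl
  · exact (h.integrable_comp_emb (MeasurableEquiv.measurableEmbedding _)).2 hF

theorem integral_pow_mul_sub_pow (a b : ℕ) {r : ℝ} (hr : 0 ≤ r) :
    ∫ x in (0 : ℝ)..r, x ^ a * (r - x) ^ b = r ^ (a + b + 1) * (a ! * b ! / (a + b + 1)!) := by
  rcases hr.eq_or_lt with rfl | hr
  · simp
  have hbeta := Complex.betaIntegral_scaled (a + 1) (b + 1) hr
  rw [Complex.betaIntegral_eq_Gamma_mul_div _ _ (by simp; positivity) (by simp; positivity),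
    show ((a : ℂ) + 1 + (b + 1)) = ((a + b + 1 : ℕ) : ℂ) + 1 by push_cast; ring,
    Complex.Gamma_nat_eq_factorial, Complex.Gamma_nat_eq_factorial,
    Complex.Gamma_nat_eq_factorial] at hbeta
  simp only [add_sub_cancel_right, Complex.cpow_natCast] at hbeta
  apply Complex.ofReal_injective
  rw [← intervalIntegral.integral_ofReal]
  push_cast
  exact hbeta

theorem integral_indicator_cornerSimplex_cons {n : ℕ} (α : Fin (n + 1) → ℕ) (r x : ℝ) :
    ∫ z : Fin n → ℝ, (cornerSimplex (n + 1) r).indicator (fun y => ∏ i, y i ^ α i) (Fin.cons x z)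
      = (Set.Icc 0 r).indicator
          (fun x => x ^ α 0 * ∫ z in cornerSimplex n (r - x), ∏ j, z j ^ α j.succ) x := by
  by_cases hx : x ∈ Set.Icc 0 r
  · have hsection : (fun z => (cornerSimplex (n + 1) r).indicator (fun y => ∏ i, y i ^ α i)
        (Fin.cons x z)) = (cornerSimplex n (r - x)).indicator
          (fun z => x ^ α 0 * ∏ j, z j ^ α j.succ) := by
      ext z
      by_cases hz : z ∈ cornerSimplex n (r - x)
      · rw [Set.indicator_of_mem (cornerSimplex.cons_mem_iff.2 ⟨hx.1, hz⟩),
          Set.indicator_of_mem hz, Fin.prod_univ_succ]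
        simp only [Fin.cons_zero, Fin.cons_succ]
      · rw [Set.indicator_of_notMem (fun h => hz (cornerSimplex.cons_mem_iff.1 h).2),
          Set.indicator_of_notMem hz]
    rw [hsection, integral_indicator (cornerSimplex.measurableSet n _), integral_const_mul,
      Set.indicator_of_mem hx]
  · have hempty : ∀ z, (Fin.cons x z : Fin (n + 1) → ℝ) ∉ cornerSimplex (n + 1) r := by
      intro z hz
      rw [cornerSimplex.cons_mem_iff] at hz
      refine hx ⟨hz.1, ?_⟩
      by_contra! hrx
      rw [cornerSimplex.eq_empty (sub_neg.2 hrx)] at hz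
      exact hz.2
    simp [hx, hempty]

theorem integral_prod_pow_cornerSimplex :
    ∀ (n : ℕ) (α : Fin n → ℕ) {r : ℝ}, 0 ≤ r →
      ∫ y in cornerSimplex n r, ∏ i, y i ^ α i
        = r ^ (n + ∑ i, α i) * (∏ i, ((α i)! : ℝ)) / ((n + ∑ i, α i)! : ℝ)
  | 0, α, r, hr => by
    have huniv : cornerSimplex 0 r = Set.univ := by simp [cornerSimplex, hr]
    simp [huniv, measureReal_def, volume_pi]
  | n + 1, α, r, hr => by
    set b := n + ∑ j : Fin n, α j.succ
    have hint : Integrable ((cornerSimplex (n + 1) r).indicator fun y => ∏ i, y i ^ α i) :=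
      (cornerSimplex.integrableOn (by fun_prop) r).integrable_indicator
        (cornerSimplex.measurableSet _ r)
    have hslice : ∀ x ∈ Set.Icc 0 r,
        x ^ α 0 * ∫ z in cornerSimplex n (r - x), ∏ j, z j ^ α j.succ
          = x ^ α 0 * (r - x) ^ b * ((∏ j : Fin n, ((α j.succ)! : ℝ)) / (b ! : ℝ)) :=
      fun x hx => by
        rw [integral_prod_pow_cornerSimplex n _ (sub_nonneg.2 hx.2)]
        ring
    rw [← integral_indicator (cornerSimplex.measurableSet _ r),
      integral_eq_integral_integral_cons hint]
    simp_rw [integral_indicator_cornerSimplex_cons]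
    rw [integral_indicator measurableSet_Icc, setIntegral_congr_fun measurableSet_Icc hslice,
      integral_Icc_eq_integral_Ioc, ← intervalIntegral.integral_of_le hr,
      intervalIntegral.integral_mul_const, integral_pow_mul_sub_pow _ _ hr,
      Fin.prod_univ_succ, Fin.sum_univ_succ]
    have hexp : α 0 + b + 1 = n + 1 + (α 0 + ∑ j : Fin n, α j.succ) := by omega
    rw [hexp]
    field_simp

theorem MvPolynomial.IsHomogeneous.sum_eq_of_mem_support {σ R : Type*} [Fintype σ]
    [CommSemiring R] {j : ℕ} {p : MvPolynomial σ R} (hp : p.IsHomogeneous j) {α : σ →₀ ℕ}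
    (hα : α ∈ p.support) : ∑ i, α i = j := by
  rw [← Finsupp.degree_eq_sum]
  exact (hp.degree_eq_sum_deg_support hα).symm

theorem integral_eval_cornerSimplex_one_of_isHomogeneous {n j : ℕ} {p : MvPolynomial (Fin n) ℝ}
    (hp : p.IsHomogeneous j) :
    ∫ y in cornerSimplex n 1, MvPolynomial.eval y p = bombieriEval p 1 / (n + j)! := by
  simp_rw [MvPolynomial.eval_eq']
  rw [integral_finsetSum _ fun α _ => (cornerSimplex.integrableOn (by fun_prop) 1),
    bombieriEval, sum_div]
  refine sum_congr rfl fun α hα => ?_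
  rw [integral_const_mul, integral_prod_pow_cornerSimplex n _ zero_le_one,
    hp.sum_eq_of_mem_support hα]
  simp only [one_pow, Pi.one_apply, prod_const_one]
  ring

theorem bombieriEval_const_of_isHomogeneous {n j : ℕ} {p : MvPolynomial (Fin n) ℝ}
    (hp : p.IsHomogeneous j) (c : ℝ) :
    bombieriEval p (fun _ => c) = c ^ j * bombieriEval p 1 := by
  simp only [bombieriEval, Pi.one_apply, one_pow, prod_const_one, mul_one, mul_sum]
  refine sum_congr rfl fun α hα => ?_
  rw [prod_pow_eq_pow_sum, hp.sum_eq_of_mem_support hα, mul_comm]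

theorem bombieriEval_of_isHomogeneous_zero {n : ℕ} {p : MvPolynomial (Fin n) ℝ}
    (hp : p.IsHomogeneous 0) (x : Fin n → ℝ) : bombieriEval p x = p.coeff 0 := by
  have hsupp : p.support ⊆ {0} := fun α hα =>
    mem_singleton.2 <| (Finsupp.degree_eq_zero_iff α).1 (hp.degree_eq_sum_deg_support hα).symm
  rw [bombieriEval, sum_subset hsupp]
  · simp
  · intro α _ hα
    simp [MvPolynomial.notMem_support_iff.1 hα]

theorem prod_range_rpow_inv_pow (n j : ℕ) :
    ((∏ k ∈ range j, (n + 1 + k : ℝ)) ^ ((1 : ℝ) / j))⁻¹ ^ j = n ! / (n + j)! := by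
  rcases eq_or_ne j 0 with rfl | hj
  · simp only [pow_zero, add_zero]
    exact (div_self (by positivity)).symm
  have hprod : ∏ k ∈ range j, (n + 1 + k : ℝ) = (n + j)! / n ! := by
    rw [eq_div_iff (by positivity), ← Nat.factorial_mul_ascFactorial,
      Nat.ascFactorial_eq_prod_range]
    push_cast
    ring
  rw [inv_pow, one_div, Real.rpow_inv_natCast_pow (by positivity) hj, hprod, inv_div]

theorem integral_eval_cornerSimplex_one_eq_bombieriEval {n j : ℕ} {p : MvPolynomial (Fin n) ℝ}
    (hp : p.IsHomogeneous j) :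
    ∫ y in cornerSimplex n 1, MvPolynomial.eval y p = (1 / (n ! : ℝ)) *
      bombieriEval p (fun _ => ((∏ k ∈ range j, (n + 1 + k : ℝ)) ^ ((1 : ℝ) / j))⁻¹) := by
  rw [bombieriEval_const_of_isHomogeneous hp, prod_range_rpow_inv_pow,
    integral_eval_cornerSimplex_one_of_isHomogeneous hp]
  field_simp

theorem Matrix.setOf_mulVec_sub_mem_eq_image {ι K : Type*} [Fintype ι] [DecidableEq ι] [Field K]
    {A : Matrix ι ι K} (hA : IsUnit A.det) (a : ι → K) (S : Set (ι → K)) :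
    {x | A *ᵥ (x - a) ∈ S} = (fun y => A⁻¹ *ᵥ y + a) '' S := by
  ext x
  constructor
  · intro hx
    exact ⟨A *ᵥ (x - a), hx, by simp [mulVec_mulVec, nonsing_inv_mul A hA]⟩
  · rintro ⟨y, hy, rfl⟩
    simpa [mulVec_mulVec, mul_nonsing_inv A hA] using hy

theorem Matrix.setIntegral_mulVec_sub_mem {E : Type*} [NormedAddCommGroup E] [NormedSpace ℝ E]
    {ι : Type*} [Fintype ι] [DecidableEq ι] {A : Matrix ι ι ℝ} (hA : IsUnit A.det) (a : ι → ℝ)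
    {S : Set (ι → ℝ)} (hS : MeasurableSet S) (F : (ι → ℝ) → E) :
    ∫ x in {x | A *ᵥ (x - a) ∈ S}, F x = |A.det|⁻¹ • ∫ y in S, F (A⁻¹ *ᵥ y + a) := by
  set L := LinearMap.toContinuousLinearMap (toLin' A⁻¹)
  have hderiv : ∀ y ∈ S, HasFDerivWithinAt (fun y => A⁻¹ *ᵥ y + a) L S y := fun y _ =>
    (L.hasFDerivAt.add_const a).hasFDerivWithinAt
  have hinj : Set.InjOn (fun y => A⁻¹ *ᵥ y + a) S := fun y₁ _ y₂ _ h => by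
    simpa [mulVec_mulVec, mul_nonsing_inv A hA] using congrArg (A *ᵥ ·) (add_right_cancel h)
  have hdet : |L.det| = |A.det|⁻¹ := by
    simp [L, ContinuousLinearMap.det, LinearMap.det_toLin', det_nonsing_inv, Ring.inverse_eq_inv']
  rw [setOf_mulVec_sub_mem_eq_image hA,
    integral_image_eq_integral_abs_det_fderiv_smul volume hS hderiv hinj, hdet, integral_smul]

theorem integral_poly_arbitrary_simplex (n t : ℕ) (A : Matrix (Fin n) (Fin n) ℝ)
    (hA : IsUnit A.det) (a : Fin n → ℝ)
    (f : MvPolynomial (Fin n) ℝ) (g : ℕ → MvPolynomial (Fin n) ℝ)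
    (hg : ∀ j, (g j).IsHomogeneous j)
    (hgf : ∀ y : Fin n → ℝ,
      MvPolynomial.eval y (∑ j ∈ Finset.range (t + 1), g j) =
        MvPolynomial.eval (A⁻¹.mulVec y + a) f) :
    ∫ x in {x : Fin n → ℝ |
        (∀ i, 0 ≤ A.mulVec (x - a) i) ∧ ∑ i, A.mulVec (x - a) i ≤ 1},
      MvPolynomial.eval x f =
      (1 / |A.det|) * (1 / (Nat.factorial n : ℝ)) *
        (MvPolynomial.coeff 0 (g 0) +
          ∑ j ∈ Finset.Icc 1 t,
            bombieriEval (g j)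
              (fun _ => ((∏ k ∈ Finset.range j, (n + 1 + k : ℝ)) ^ ((1 : ℝ) / j))⁻¹)) := by
  change ∫ x in {x | A *ᵥ (x - a) ∈ cornerSimplex n 1}, _ = _
  simp_rw [setIntegral_mulVec_sub_mem hA a (cornerSimplex.measurableSet n 1), ← hgf, map_sum]
  rw [integral_finsetSum _ fun j _ => cornerSimplex.integrableOn (MvPolynomial.continuous_eval _) 1,
    sum_range_eq_add_Ico _ t.add_one_pos, Ico_add_one_right_eq_Icc]
  simp_rw [integral_eval_cornerSimplex_one_eq_bombieriEval (hg _)]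
  rw [bombieriEval_of_isHomogeneous_zero (hg 0), ← mul_sum, smul_eq_mul, one_div]
  ring
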